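/- For integers m ≥ 0 and n, k ≥ 1, one has x₀^m ш (x₀^n x₁^k) = Σ_{m₁+m₂=m, m_i ≥ 0} C(m₁+n-1, n-1) · x₀^{m₁+n} 𝔅_{k+1}^{m₂}, an identity of multisets of words, where a binomial coefficient c multiplying a multiset means the multiset repeated c times. -/

import Mathlib

/-- The shuffle product of two words, as a multiset of words. -/
def shuffle {X : Type*} : List X → List X → Multiset (List X)
  | u, [] => {u}
  | [], v => {v}
  | a :: u, b :: v =>
      (shuffle u (b :: v)).map (a :: ·) + (shuffle (a :: u) v).map (b :: ·)
termination_by u v => u.length + v.length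

/-- The two-letter alphabet `X = {x₀, x₁}`. -/
def x0 : Bool := false
def x1 : Bool := true

/-- `𝔅_r^m`: the multiset of all words `x₀^{m₁} x₁ x₀^{m₂} x₁ ⋯ x₁ x₀^{m_r}`
with `m₁ + ⋯ + m_r = m`, `m_i ≥ 0`. -/
def B (r m : ℕ) : Multiset (List Bool) :=
  (Finset.Nat.antidiagonalTuple r m).val.map fun f =>
    List.intercalate [x1] (List.ofFn fun i => List.replicate (f i) x0)

/-- `S w T`: the multiset of all concatenations `u ++ w ++ v` with `u ∈ S`, `v ∈ T`,
counted with multiplicity. -/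
def msConcat {X : Type*} (S : Multiset (List X)) (w : List X) (T : Multiset (List X)) :
    Multiset (List X) :=
  S.bind fun u => T.map fun v => u ++ w ++ v

/-!
Splitting off the first letter, the recursion of `shuffle` gives
`x₀^m ш (b v) = Σ_{m₁+m₂=m} x₀^{m₁} b (x₀^{m₂} ш v)` for every letter `b` and word `v`.
With `b = x₁` this identifies `x₀^m ш x₁^k` with `𝔅_{k+1}^m` by induction on `k`. With `b = x₀`
it is the case `n = 1` of `x₀^m ш x₀^n v = Σ C(m₁+n-1, n-1) x₀^{m₁+n} (x₀^{m₂} ш v)`,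
whose induction step in `n` is Pascal's rule.
-/

open Finset List

theorem Multiset.map_finset_sum {α β ι : Type*} (f : α → β) (s : Finset ι)
    (g : ι → Multiset α) :
    (∑ i ∈ s, g i).map f = ∑ i ∈ s, (g i).map f :=
  map_sum (Multiset.mapAddMonoidHom f) g s

section Shuffle

variable {X : Type*}

theorem shuffle_nil_left (v : List X) : shuffle [] v = {v} := by
  cases v <;> simp [shuffle]

theorem shuffle_nil_right (u : List X) : shuffle u [] = {u} := by
  simp [shuffle]

theorem shuffle_cons_cons (a b : X) (u v : List X) :
    shuffle (a :: u) (b :: v) =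
      (shuffle u (b :: v)).map (a :: ·) + (shuffle (a :: u) v).map (b :: ·) := by
  rw [shuffle]

theorem cons_comp_replicate_append (a : X) (n : ℕ) :
    (a :: ·) ∘ (replicate n a ++ ·) = (replicate (n + 1) a ++ ·) :=
  rfl

theorem shuffle_replicate_cons (a b : X) (v : List X) (m : ℕ) :
    shuffle (replicate m a) (b :: v) =
      ∑ p ∈ antidiagonal m, (shuffle (replicate p.2 a) v).map (replicate p.1 a ++ b :: ·) := by
  induction m with
  | zero => simp [shuffle_nil_left]
  | succ m ih =>
    rw [replicate_succ, shuffle_cons_cons, ← replicate_succ, ih, Nat.sum_antidiagonal_succ,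
      Multiset.map_finset_sum, add_comm]
    simp [Multiset.map_map, replicate_succ]

theorem shuffle_replicate_replicate_append (a : X) (v : List X) (m s : ℕ) :
    shuffle (replicate m a) (replicate (s + 1) a ++ v) =
      ∑ p ∈ antidiagonal m, (p.1 + s).choose s •
        (shuffle (replicate p.2 a) v).map (replicate (p.1 + s + 1) a ++ ·) := by
  induction s generalizing m with
  | zero => simp [shuffle_replicate_cons, replicate_succ']
  | succ s ihs =>
    induction m with
    | zero => simp [shuffle_nil_left]
    | succ m ihm =>
      have step : shuffle (replicate (m + 1) a) (replicate (s + 2) a ++ v) =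
          (shuffle (replicate m a) (replicate (s + 2) a ++ v)).map (a :: ·) +
            (shuffle (replicate (m + 1) a) (replicate (s + 1) a ++ v)).map (a :: ·) :=
        shuffle_cons_cons _ _ _ _
      rw [step, ihm, ihs, Nat.sum_antidiagonal_succ, Nat.sum_antidiagonal_succ]
      simp only [Multiset.map_add, Multiset.map_finset_sum, Multiset.map_nsmul, Multiset.map_map,
        cons_comp_replicate_append]
      rw [add_left_comm, ← sum_add_distrib]
      congr 1
      · simp
      · refine sum_congr rfl fun p _ => ?_
        rw [show p.1 + 1 + (s + 1) = p.1 + (s + 1) + 1 by omega,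
          show p.1 + 1 + s = p.1 + (s + 1) by omega, ← add_nsmul, Nat.choose_succ_succ' _ s,
          add_comm]

end Shuffle

def blockWord {r : ℕ} (f : Fin r → ℕ) : List Bool :=
  intercalate [x1] (ofFn fun i => replicate (f i) x0)

theorem blockWord_cons {r : ℕ} (a : ℕ) (f : Fin (r + 1) → ℕ) :
    blockWord (Fin.cons a f) = replicate a x0 ++ x1 :: blockWord f := by
  simp [blockWord, List.ofFn_succ]

theorem Multiset.Nat.antidiagonalTuple_succ (r m : ℕ) :
    Multiset.Nat.antidiagonalTuple (r + 1) m =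
      (antidiagonal m).bind fun p => (antidiagonalTuple r p.2).map (Fin.cons p.1) := by
  simp only [Multiset.Nat.antidiagonalTuple, List.Nat.antidiagonalTuple, antidiagonal, coe_bind,
    map_coe]

theorem B_eq_map_blockWord (r m : ℕ) :
    B r m = (Finset.Nat.antidiagonalTuple r m).val.map blockWord :=
  rfl

theorem B_one (m : ℕ) : B 1 m = {replicate m x0} := by
  simp [B_eq_map_blockWord, Finset.Nat.antidiagonalTuple_one, blockWord]

theorem B_add_two (r m : ℕ) :
    B (r + 2) m = ∑ p ∈ antidiagonal m, (B (r + 1) p.2).map (replicate p.1 x0 ++ x1 :: ·) := by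
  simp only [B_eq_map_blockWord]
  change Multiset.map blockWord (Multiset.Nat.antidiagonalTuple (r + 2) m) = _
  rw [Multiset.Nat.antidiagonalTuple_succ, Multiset.map_bind]
  change ∑ p ∈ antidiagonal m, _ = _
  refine sum_congr rfl fun p _ => ?_
  rw [Multiset.map_map, Multiset.map_map]
  exact Multiset.map_congr rfl fun f _ => blockWord_cons p.1 f

theorem shuffle_replicate_x0_replicate_x1 (m k : ℕ) :
    shuffle (replicate m x0) (replicate k x1) = B (k + 1) m := by
  induction k generalizing m with
  | zero => simp [shuffle_nil_right, B_one]
  | succ k ih =>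
    simp only [replicate_succ, shuffle_replicate_cons, ih, B_add_two]

theorem shuffle_x0_pow_x0_pow_x1_pow_general (m n k : ℕ) (hn : 1 ≤ n) :
    shuffle (List.replicate m x0) (List.replicate n x0 ++ List.replicate k x1) =
      ∑ p ∈ Finset.HasAntidiagonal.antidiagonal m,
        Nat.choose (p.1 + n - 1) (n - 1) •
          (B (k + 1) p.2).map (fun w => List.replicate (p.1 + n) x0 ++ w) := by
  obtain ⟨s, rfl⟩ : ∃ s, n = s + 1 := ⟨n - 1, by omega⟩
  rw [shuffle_replicate_replicate_append]
  refine sum_congr rfl fun p _ => ?_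
  simp only [shuffle_replicate_x0_replicate_x1, Nat.add_sub_cancel, ← add_assoc]

theorem shuffle_x0_pow_x0_pow_x1_pow (m n k : ℕ) (hn : 1 ≤ n) (hk : 1 ≤ k) :
    shuffle (List.replicate m x0) (List.replicate n x0 ++ List.replicate k x1) =
      ∑ p ∈ Finset.HasAntidiagonal.antidiagonal m,
        Nat.choose (p.1 + n - 1) (n - 1) •
          (B (k + 1) p.2).map (fun w => List.replicate (p.1 + n) x0 ++ w) :=
  shuffle_x0_pow_x0_pow_x1_pow_general m n k hn
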